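/- arXiv:2401.14584 — 2 statements merged into one kernel-verified Lean document; each statement's English description precedes it below -/
import Mathlib

section
/- If (p_n) is a sequence of probability densities and p a probability density, all with respect to a σ-finite measure μ, such that TV(p_n, p) → 0, then for every α ∈ (0,1) the Rényi α-divergence D_α(p_n, p) → 0 as n → ∞. -/
open MeasureTheory Filter

/-
For densities `f, g` write `A = ∫ f^α g^(1-α)`, so that `α(1-α) D_α(f, g) = 1 - A`. Pointwise
`min(f, g) ≤ f^α g^(1-α) ≤ α f + (1-α) g` (weighted AM-GM), and integrating gives
`1 - TV(f, g) = ∫ min(f, g) ≤ A ≤ 1`. Hence `0 ≤ α(1-α) D_α(f, g) ≤ TV(f, g)`, and `D_α(pₙ, p)`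
is squeezed to zero.
-/

theorem Real.min_le_rpow_mul_rpow {x y a : ℝ} (hx : 0 ≤ x) (hy : 0 ≤ y) (ha₀ : 0 ≤ a)
    (ha₁ : a ≤ 1) : min x y ≤ x ^ a * y ^ (1 - a) := by
  have hm : 0 ≤ min x y := le_min hx hy
  calc min x y = min x y ^ a * min x y ^ (1 - a) := by
        rw [← Real.rpow_add' hm (by norm_num), add_sub_cancel, Real.rpow_one]
    _ ≤ x ^ a * y ^ (1 - a) := by
        gcongr
        · exact min_le_left x y
        · exact min_le_right x y

theorem Real.rpow_mul_rpow_le_add {x y a : ℝ} (hx : 0 ≤ x) (hy : 0 ≤ y) (ha₀ : 0 ≤ a)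
    (ha₁ : a ≤ 1) : x ^ a * y ^ (1 - a) ≤ a * x + (1 - a) * y :=
  Real.geom_mean_le_arith_mean2_weighted ha₀ (by linarith) hx hy (by ring)

theorem min_eq_add_sub_abs_sub_div_two {α : Type*} [Field α] [LinearOrder α]
    [IsStrictOrderedRing α] (x y : α) : min x y = (x + y - |x - y|) / 2 := by
  have := min_add_max x y
  have := max_sub_min_eq_abs' x y
  linarith

namespace MeasureTheory

variable {Ω : Type*} [MeasurableSpace Ω] {μ : Measure Ω} {f g : Ω → ℝ} {a : ℝ}

theorem integral_min_eq (hf : Integrable f μ) (hg : Integrable g μ) :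
    ∫ x, min (f x) (g x) ∂μ = (∫ x, f x ∂μ + ∫ x, g x ∂μ - ∫ x, |f x - g x| ∂μ) / 2 := by
  simp_rw [min_eq_add_sub_abs_sub_div_two]
  rw [integral_div, integral_sub (by exact hf.add hg) (by exact (hf.sub hg).abs),
    integral_add hf hg]

theorem Integrable.rpow_mul_rpow (hf : Integrable f μ) (hg : Integrable g μ) (hf₀ : 0 ≤ᵐ[μ] f)
    (hg₀ : 0 ≤ᵐ[μ] g) (ha₀ : 0 ≤ a) (ha₁ : a ≤ 1) :
    Integrable (fun x => f x ^ a * g x ^ (1 - a)) μ := by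
  refine ((hf.const_mul a).add (hg.const_mul (1 - a))).mono' ?_ ?_
  · exact ((Real.continuous_rpow_const ha₀).comp_aestronglyMeasurable hf.1).mul
      ((Real.continuous_rpow_const (by linarith)).comp_aestronglyMeasurable hg.1)
  · filter_upwards [hf₀, hg₀] with x hfx hgx
    rw [Real.norm_of_nonneg (mul_nonneg (Real.rpow_nonneg hfx _) (Real.rpow_nonneg hgx _))]
    exact Real.rpow_mul_rpow_le_add hfx hgx ha₀ ha₁

theorem integral_rpow_mul_rpow_le (hf : Integrable f μ) (hg : Integrable g μ) (hf₀ : 0 ≤ᵐ[μ] f)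
    (hg₀ : 0 ≤ᵐ[μ] g) (ha₀ : 0 ≤ a) (ha₁ : a ≤ 1) :
    ∫ x, f x ^ a * g x ^ (1 - a) ∂μ ≤ a * ∫ x, f x ∂μ + (1 - a) * ∫ x, g x ∂μ := by
  rw [← integral_const_mul, ← integral_const_mul, ← integral_add (hf.const_mul a)
    (hg.const_mul (1 - a))]
  refine integral_mono_ae (hf.rpow_mul_rpow hg hf₀ hg₀ ha₀ ha₁)
    ((hf.const_mul a).add (hg.const_mul (1 - a))) ?_
  filter_upwards [hf₀, hg₀] with x hfx hgx
  exact Real.rpow_mul_rpow_le_add hfx hgx ha₀ ha₁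

theorem integral_min_le_integral_rpow_mul_rpow (hf : Integrable f μ) (hg : Integrable g μ)
    (hf₀ : 0 ≤ᵐ[μ] f) (hg₀ : 0 ≤ᵐ[μ] g) (ha₀ : 0 ≤ a) (ha₁ : a ≤ 1) :
    ∫ x, min (f x) (g x) ∂μ ≤ ∫ x, f x ^ a * g x ^ (1 - a) ∂μ := by
  refine integral_mono_ae (hf.inf hg) (hf.rpow_mul_rpow hg hf₀ hg₀ ha₀ ha₁) ?_
  filter_upwards [hf₀, hg₀] with x hfx hgx
  exact Real.min_le_rpow_mul_rpow hfx hgx ha₀ ha₁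

theorem one_sub_integral_rpow_mul_rpow_mem_Icc (hf₀ : 0 ≤ᵐ[μ] f) (hg₀ : 0 ≤ᵐ[μ] g)
    (hf₁ : ∫ x, f x ∂μ = 1) (hg₁ : ∫ x, g x ∂μ = 1) (ha₀ : 0 ≤ a) (ha₁ : a ≤ 1) :
    1 - ∫ x, f x ^ a * g x ^ (1 - a) ∂μ ∈ Set.Icc 0 ((1 / 2) * ∫ x, |f x - g x| ∂μ) := by
  have hf := integrable_of_integral_eq_one hf₁
  have hg := integrable_of_integral_eq_one hg₁
  have hupper := integral_rpow_mul_rpow_le hf hg hf₀ hg₀ ha₀ ha₁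
  have hlower := integral_min_le_integral_rpow_mul_rpow hf hg hf₀ hg₀ ha₀ ha₁
  rw [integral_min_eq hf hg, hf₁, hg₁] at hlower
  rw [hf₁, hg₁] at hupper
  constructor <;> linarith

end MeasureTheory

theorem tv_to_zero_implies_renyi_to_zero_general {Ω : Type*} [MeasurableSpace Ω]
    (μ : Measure Ω)
    (p : ℕ → Ω → ℝ) (q : Ω → ℝ)
    (hpnn : ∀ n x, 0 ≤ p n x) (hqnn : ∀ x, 0 ≤ q x)
    (hip : ∀ n, ∫ x, p n x ∂μ = 1) (hiq : ∫ x, q x ∂μ = 1)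
    (hTV : Tendsto (fun n => (1 / 2) * ∫ x, |p n x - q x| ∂μ) atTop (nhds 0)) :
    ∀ a : ℝ, 0 < a → a < 1 →
      Tendsto (fun n => (1 - ∫ x, p n x ^ a * q x ^ (1 - a) ∂μ) / (a * (1 - a)))
        atTop (nhds 0) := by
  intro a ha₀ ha₁
  have hbounds n := one_sub_integral_rpow_mul_rpow_mem_Icc (ae_of_all μ (hpnn n))
    (ae_of_all μ hqnn) (hip n) hiq ha₀.le ha₁.le
  have hc : 0 ≤ a * (1 - a) := mul_nonneg ha₀.le (by linarith)
  refine tendsto_of_tendsto_of_tendsto_of_le_of_le tendsto_const_nhds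
    (zero_div (a * (1 - a)) ▸ hTV.div_const (a * (1 - a))) (fun n => ?_) (fun n => ?_)
  · exact div_nonneg (hbounds n).1 hc
  · exact div_le_div_of_nonneg_right (hbounds n).2 hc

/-- Convergence in total variation implies convergence of every Rényi α-divergence. -/
theorem tv_to_zero_implies_renyi_to_zero {Ω : Type*} [MeasurableSpace Ω]
    (μ : Measure Ω) [SigmaFinite μ]
    (p : ℕ → Ω → ℝ) (q : Ω → ℝ)
    (hmp : ∀ n, Measurable (p n)) (hmq : Measurable q)
    (hpnn : ∀ n x, 0 ≤ p n x) (hqnn : ∀ x, 0 ≤ q x)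
    (hip : ∀ n, ∫ x, p n x ∂μ = 1) (hiq : ∫ x, q x ∂μ = 1)
    (hTV : Tendsto (fun n => (1 / 2) * ∫ x, |p n x - q x| ∂μ) atTop (nhds 0)) :
    ∀ a : ℝ, 0 < a → a < 1 →
      Tendsto (fun n => (1 - ∫ x, p n x ^ a * q x ^ (1 - a) ∂μ) / (a * (1 - a)))
        atTop (nhds 0) :=
  tv_to_zero_implies_renyi_to_zero_general μ p q hpnn hqnn hip hiq hTV
end

section
/- If X is a noncentral chi-squared random variable with p degrees of freedom and noncentrality parameter λ ≥ 0, then for any c > 0, P(X - (p + λ) > c) ≤ exp(-(p/2)(c/(p+λ) - log(1 + c/(p+λ)))). -/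
open MeasureTheory ProbabilityTheory Real
open scoped ENNReal NNReal

/-- The noncentral chi-squared distribution with `p` degrees of freedom and
mean-shift vector `m` (noncentrality `∑ i, (m i)²`): the law of `‖Z + m‖²`
for `Z` standard normal on `ℝ^p`. -/
noncomputable def ncChiSq (p : ℕ) (m : Fin p → ℝ) : Measure ℝ :=
  (Measure.pi fun _ : Fin p => gaussianReal 0 1).map fun x => ∑ i, (x i + m i) ^ 2


lemma lintegral_pi_fin_prod {n : ℕ} (μ : Measure ℝ) [SigmaFinite μ]
    (f : Fin n → ℝ → ℝ≥0∞) (hf : ∀ i, Measurable (f i)) :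
    ∫⁻ x : Fin n → ℝ, ∏ i, f i (x i) ∂(Measure.pi fun _ => μ) = ∏ i, ∫⁻ z, f i z ∂μ := by
  induction n with
  | zero => simp
  | succ n ih =>
    have hmp := (measurePreserving_piFinSuccAbove (fun _ : Fin (n+1) => μ) 0).symm
    have hmeas : Measurable fun x : Fin (n+1) → ℝ => ∏ i, f i (x i) :=
      Finset.measurable_prod _ fun i _ => (hf i).comp (measurable_pi_apply i)
    rw [← hmp.lintegral_comp hmeas]
    simp_rw [MeasurableEquiv.piFinSuccAbove_symm_apply, Fin.insertNthEquiv,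
      Fin.prod_univ_succ, Fin.insertNth_zero]
    simp only [Fin.zero_succAbove, Nat.cast_id, Equiv.coe_fn_mk, Fin.cons_zero, Fin.cons_succ,
      cast_eq]
    rw [lintegral_prod_mul (f := f 0) (g := fun y : Fin n → ℝ => ∏ i, f i.succ (y i))
      (hf 0).aemeasurable
      (Finset.measurable_prod _ fun i _ => (hf i.succ).comp (measurable_pi_apply i)).aemeasurable,
      ih (fun i => f i.succ) (fun i => hf i.succ)]


lemma exp_sq_pdf_eq {t : ℝ} (ht : t < 1/2) (μ : ℝ) (z : ℝ) :
    Real.exp (t * (z + μ)^2) * gaussianPDFReal 0 1 z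
      = (Real.sqrt (2*π))⁻¹ * Real.exp (t * μ^2 / (1 - 2*t)) *
        Real.exp (-((1-2*t)/2) * (z - 2*t*μ/(1-2*t))^2) := by
  have h2t : (1:ℝ) - 2*t ≠ 0 := by linarith
  simp only [gaussianPDFReal, NNReal.coe_one, mul_one, sub_zero]
  rw [mul_comm (Real.exp _), mul_assoc, mul_assoc, ← Real.exp_add, ← Real.exp_add]
  congr 1
  congr 1
  field_simp
  ring

lemma integrable_exp_sq_pdf {t : ℝ} (ht : t < 1/2) (μ : ℝ) :
    Integrable (fun z => Real.exp (t * (z + μ)^2) * gaussianPDFReal 0 1 z) := by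
  have hb : 0 < (1 - 2*t)/2 := by linarith
  have := ((integrable_exp_neg_mul_sq hb).comp_sub_right (2*t*μ/(1-2*t))).const_mul
    ((Real.sqrt (2*π))⁻¹ * Real.exp (t * μ^2 / (1 - 2*t)))
  refine this.congr ?_
  filter_upwards with z
  rw [exp_sq_pdf_eq ht]

lemma integral_exp_sq_pdf {t : ℝ} (ht : t < 1/2) (μ : ℝ) :
    ∫ z, Real.exp (t * (z + μ)^2) * gaussianPDFReal 0 1 z
      = Real.exp (t * μ^2 / (1 - 2*t)) / Real.sqrt (1 - 2*t) := by
  have hb : 0 < (1 - 2*t)/2 := by linarith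
  have h2t : (0:ℝ) < 1 - 2*t := by linarith
  simp_rw [exp_sq_pdf_eq ht μ]
  rw [integral_const_mul, integral_sub_right_eq_self
    (fun z => Real.exp (-((1-2*t)/2) * z^2)) (2*t*μ/(1-2*t)), integral_gaussian]
  have h1 : π / ((1-2*t)/2) = 2*π / (1-2*t) := by field_simp
  rw [h1, Real.sqrt_div (by positivity : (0:ℝ) ≤ 2*π)]
  have hs : Real.sqrt (2*π) ≠ 0 := by positivity
  field_simp

lemma lintegral_exp_sq_gauss {t : ℝ} (ht : t < 1/2) (μ : ℝ) :
    ∫⁻ z, ENNReal.ofReal (Real.exp (t * (z + μ)^2)) ∂(gaussianReal 0 1)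
      = ENNReal.ofReal (Real.exp (t * μ^2 / (1 - 2*t)) / Real.sqrt (1 - 2*t)) := by
  have hg : Measurable fun z : ℝ => ENNReal.ofReal (Real.exp (t * (z + μ)^2)) := by
    measurability
  rw [gaussianReal_of_var_ne_zero 0 one_ne_zero,
    lintegral_withDensity_eq_lintegral_mul _ (measurable_gaussianPDF 0 1) hg]
  have h : ∀ z : ℝ, (gaussianPDF 0 1 * fun z => ENNReal.ofReal (Real.exp (t * (z + μ)^2))) z
      = ENNReal.ofReal (Real.exp (t * (z + μ)^2) * gaussianPDFReal 0 1 z) := by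
    intro z
    simp only [Pi.mul_apply, gaussianPDF]
    rw [← ENNReal.ofReal_mul (gaussianPDFReal_nonneg 0 1 z), mul_comm]
  simp_rw [h]
  rw [← ofReal_integral_eq_lintegral_ofReal (integrable_exp_sq_pdf ht μ) ?_,
    integral_exp_sq_pdf ht μ]
  filter_upwards with z
  exact mul_nonneg (Real.exp_pos _).le (gaussianPDFReal_nonneg 0 1 z)

lemma expo_id (a c lam L : ℝ) (ha : a ≠ 0) (hac : a + c ≠ 0) :
    -(c/(2*(a+c)) * (a+c)) + (c/(2*(a+c)) * lam / (a/(a+c)) - (a-lam)*(-L/2))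
      = -((a-lam)/2)*(c/a - L) := by
  field_simp
  ring

/-- Upper tail bound for the noncentral chi-squared distribution:
P(χ²_p(λ) − (p+λ) > c) ≤ exp(−(p/2)(c/(p+λ) − log(1 + c/(p+λ)))). -/
theorem ncChiSq_upper_tail (p : ℕ) (hp : 1 ≤ p) (m : Fin p → ℝ) (lam : ℝ)
    (hlam : lam = ∑ i, (m i) ^ 2) (c : ℝ) (hc : 0 < c) :
    ncChiSq p m {x | x - ((p : ℝ) + lam) > c} ≤
      ENNReal.ofReal (Real.exp (-((p : ℝ) / 2) *
        (c / ((p : ℝ) + lam) - Real.log (1 + c / ((p : ℝ) + lam))))) := by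
  have hlam0 : 0 ≤ lam := hlam ▸ Finset.sum_nonneg fun i _ => sq_nonneg _
  have hp1 : (1:ℝ) ≤ (p:ℝ) := by exact_mod_cast hp
  set a : ℝ := (p:ℝ) + lam with ha_def
  have ha : 0 < a := by rw [ha_def]; linarith
  have hac : 0 < a + c := by linarith
  set t : ℝ := c / (2*(a+c)) with ht_def
  have ht0 : 0 < t := by positivity
  have ht : t < 1/2 := by
    rw [ht_def, div_lt_iff₀ (by linarith)]; linarith
  have h2t : 1 - 2*t = a/(a+c) := by
    rw [ht_def]; field_simp; ring
  have h2tpos : (0:ℝ) < 1 - 2*t := by rw [h2t]; positivity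
  set s : ℝ := a + c with hs_def
  set f : (Fin p → ℝ) → ℝ := fun x => ∑ i, (x i + m i)^2 with hf_def
  have hfm : Measurable f := by
    apply Finset.measurable_sum
    intro i _
    exact ((measurable_pi_apply i).add_const _).pow_const 2
  set P : Measure (Fin p → ℝ) := Measure.pi fun _ => gaussianReal 0 1 with hP_def
  have hset : {x : ℝ | x - a > c} = Set.Ioi s := by
    ext x; simp only [Set.mem_setOf_eq, Set.mem_Ioi, gt_iff_lt, hs_def]
    constructor <;> intro h <;> linarith
  have hme : Measurable fun x => ENNReal.ofReal (Real.exp (t * f x)) :=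
    ((hfm.const_mul t).exp).ennreal_ofReal
  have key : ncChiSq p m {x | x - a > c}
      ≤ ENNReal.ofReal (Real.exp (-(t*s))) * ∫⁻ x, ENNReal.ofReal (Real.exp (t * f x)) ∂P := by
    rw [ncChiSq, hset, Measure.map_apply hfm measurableSet_Ioi]
    have h1 : P (f ⁻¹' Set.Ioi s) = ∫⁻ x in f ⁻¹' Set.Ioi s, 1 ∂P := (setLIntegral_one _).symm
    rw [h1]
    have h2 : ∫⁻ x in f ⁻¹' Set.Ioi s, 1 ∂P
        ≤ ∫⁻ x in f ⁻¹' Set.Ioi s, ENNReal.ofReal (Real.exp (t * (f x - s))) ∂P := by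
      refine setLIntegral_mono (((hfm.sub_const s).const_mul t).exp.ennreal_ofReal) ?_
      intro x hx
      have hx' : s < f x := hx
      have : (1:ℝ≥0∞) = ENNReal.ofReal (Real.exp 0) := by simp
      rw [this]
      exact ENNReal.ofReal_le_ofReal (Real.exp_le_exp.mpr
        (mul_nonneg ht0.le (by linarith)))
    refine le_trans (h2.trans (setLIntegral_le_lintegral _ _)) (le_of_eq ?_)
    have h3 : ∀ x, ENNReal.ofReal (Real.exp (t * (f x - s)))
        = ENNReal.ofReal (Real.exp (-(t*s))) * ENNReal.ofReal (Real.exp (t * f x)) := by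
      intro x
      rw [← ENNReal.ofReal_mul (Real.exp_pos _).le, ← Real.exp_add]
      congr 2; ring
    simp_rw [h3]
    exact lintegral_const_mul _ hme
  have hprod : ∫⁻ x, ENNReal.ofReal (Real.exp (t * f x)) ∂P
      = ∏ i : Fin p, ENNReal.ofReal
          (Real.exp (t * (m i)^2 / (1 - 2*t)) / Real.sqrt (1 - 2*t)) := by
    have h4 : ∀ x : Fin p → ℝ, ENNReal.ofReal (Real.exp (t * f x))
        = ∏ i, ENNReal.ofReal (Real.exp (t * (x i + m i)^2)) := by
      intro x
      rw [hf_def, Finset.mul_sum, Real.exp_sum,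
        ENNReal.ofReal_prod_of_nonneg (fun i _ => (Real.exp_pos _).le)]
    simp_rw [h4]
    rw [hP_def, lintegral_pi_fin_prod (gaussianReal 0 1)
      (fun i z => ENNReal.ofReal (Real.exp (t * (z + m i)^2)))
      (fun i => by measurability)]
    exact Finset.prod_congr rfl fun i _ => lintegral_exp_sq_gauss ht (m i)
  refine (key.trans_eq ?_)
  rw [hprod, ← ENNReal.ofReal_prod_of_nonneg
    (fun i _ => div_nonneg (Real.exp_pos _).le (Real.sqrt_nonneg _)),
    ← ENNReal.ofReal_mul (Real.exp_pos _).le]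
  congr 1
  -- real algebra
  rw [Finset.prod_div_distrib, Finset.prod_const, Finset.card_univ, Fintype.card_fin,
    ← Real.exp_sum]
  have hsum : ∑ i : Fin p, t * (m i)^2 / (1-2*t) = t * lam / (1-2*t) := by
    rw [hlam, Finset.mul_sum, Finset.sum_div]
  have hsq : Real.sqrt (1-2*t) ^ p = Real.exp ((p:ℝ) * (Real.log (1-2*t)/2)) := by
    rw [Real.exp_nat_mul, ← Real.log_sqrt h2tpos.le,
      Real.exp_log (Real.sqrt_pos.mpr h2tpos)]
  rw [hsum, hsq, ← Real.exp_sub, ← Real.exp_add]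
  congr 1
  have hlog : Real.log (1-2*t) = - Real.log (1 + c/a) := by
    rw [h2t, show a/(a+c) = (1+c/a)⁻¹ by field_simp, Real.log_inv]
  have hpa : (p:ℝ) = a - lam := by rw [ha_def]; ring
  rw [hlog, h2t, hpa, ht_def, hs_def]
  exact expo_id a c lam _ ha.ne' hac.ne'
end
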